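/- Let (Ω, μ) be a probability space. Suppose that for every real s ≥ 0 we are given a measurable event A(s) ⊆ Ω with p(s) = μ(A(s)) measurable in s, and that for all 0 ≤ t ≤ u the event O(t,u) = {ω : ∃ s ∈ [t,u], ω ∈ A(s)} is measurable. Write I(t,u) = ∫_t^u p(s) ds, and assume the renewal inequality: for all 0 ≤ t ≤ u, I(t,u) ≤ μ(O(t,u))·(t + I(t,u)). If for every t ≥ 0 the integral I(t,u) tends to ∞ as u → ∞, then for every t ≥ 0 one has μ(⋃_{u ≥ t} O(t,u)) = 1; that is, almost surely some event A(s) with s ≥ t occurs. -/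

import Mathlib

open MeasureTheory Set Filter Topology
open scoped ENNReal

/-! The renewal inequality says `μ(O(t,u)) ≥ I(t,u) / (t + I(t,u))`, and this ratio tends to `1`
as `I(t,u) → ∞`; since every `O(t,u)` lies in the union, the union has probability `1`. -/

theorem Filter.Tendsto.div_const_add_self_nhds_one {α : Type*} {l : Filter α} {f : α → ℝ}
    (c : ℝ) (hf : Tendsto f l atTop) : Tendsto (fun x => f x / (c + f x)) l (𝓝 1) := by
  have hden : Tendsto (fun x => c + f x) l atTop := tendsto_atTop_add_const_left _ _ hf
  have hlim : Tendsto (fun x => 1 - c / (c + f x)) l (𝓝 (1 - 0)) :=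
    tendsto_const_nhds.sub (tendsto_const_nhds.div_atTop hden)
  rw [sub_zero] at hlim
  refine hlim.congr' ?_
  filter_upwards [hden.eventually_gt_atTop 0] with x hx
  field_simp
  ring

theorem MeasureTheory.measure_eq_one_of_tendsto_le {Ω α : Type*} [MeasurableSpace Ω]
    {μ : Measure Ω} [IsProbabilityMeasure μ] {s : Set Ω} {l : Filter α} [l.NeBot]
    {r : α → ℝ} (hr : Tendsto r l (𝓝 1)) (hle : ∀ᶠ x in l, r x ≤ μ.real s) :
    μ s = 1 := by
  have h : (1 : ℝ≥0∞).toReal ≤ (μ s).toReal := by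
    rw [ENNReal.toReal_one]; exact le_of_tendsto hr hle
  exact le_antisymm prob_le_one
    ((ENNReal.toReal_le_toReal ENNReal.one_ne_top (measure_ne_top μ s)).1 h)

theorem stmt_0_general {Ω : Type*} [MeasurableSpace Ω] (μ : Measure Ω) [IsProbabilityMeasure μ]
    (A : ℝ → Set Ω)
    (hren : ∀ t u : ℝ, 0 ≤ t → t ≤ u →
      (∫ s in t..u, (μ (A s)).toReal) ≤
        (μ {ω : Ω | ∃ s ∈ Icc t u, ω ∈ A s}).toReal *
          (t + ∫ s in t..u, (μ (A s)).toReal))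
    (hdiv : ∀ t : ℝ, 0 ≤ t →
      Tendsto (fun u : ℝ => ∫ s in t..u, (μ (A s)).toReal) atTop atTop) :
    ∀ t : ℝ, 0 ≤ t →
      μ (⋃ u ∈ Ici t, {ω : Ω | ∃ s ∈ Icc t u, ω ∈ A s}) = 1 := by
  intro t ht
  set O : ℝ → Set Ω := fun u => {ω : Ω | ∃ s ∈ Icc t u, ω ∈ A s}
  set I : ℝ → ℝ := fun u => ∫ s in t..u, (μ (A s)).toReal
  have hI : Tendsto I atTop atTop := hdiv t ht
  refine measure_eq_one_of_tendsto_le (hI.div_const_add_self_nhds_one t) ?_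
  filter_upwards [eventually_ge_atTop t,
    (tendsto_atTop_add_const_left _ t hI).eventually_gt_atTop 0] with u htu hpos
  calc I u / (t + I u)
      ≤ μ.real (O u) := (div_le_iff₀ hpos).2 (hren t u ht htu)
    _ ≤ μ.real (⋃ u ∈ Ici t, O u) :=
      measureReal_mono (subset_biUnion_of_mem (u := O) htu) (measure_ne_top μ _)

theorem stmt_0 {Ω : Type*} [MeasurableSpace Ω] (μ : Measure Ω) [IsProbabilityMeasure μ]
    (A : ℝ → Set Ω)
    (hA : ∀ s : ℝ, 0 ≤ s → MeasurableSet (A s))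
    (hp : Measurable fun s : ℝ => (μ (A s)).toReal)
    (hO : ∀ t u : ℝ, 0 ≤ t → t ≤ u → MeasurableSet {ω : Ω | ∃ s ∈ Icc t u, ω ∈ A s})
    (hren : ∀ t u : ℝ, 0 ≤ t → t ≤ u →
      (∫ s in t..u, (μ (A s)).toReal) ≤
        (μ {ω : Ω | ∃ s ∈ Icc t u, ω ∈ A s}).toReal *
          (t + ∫ s in t..u, (μ (A s)).toReal))
    (hdiv : ∀ t : ℝ, 0 ≤ t →
      Tendsto (fun u : ℝ => ∫ s in t..u, (μ (A s)).toReal) atTop atTop) :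
    ∀ t : ℝ, 0 ≤ t →
      μ (⋃ u ∈ Ici t, {ω : Ω | ∃ s ∈ Icc t u, ω ∈ A s}) = 1 :=
  stmt_0_general μ A hren hdiv
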